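/- arXiv:2403.03773 — 4 statements merged into one kernel-verified Lean document; each statement's English description precedes it below -/
import Mathlib

section
/- Let x' ∈ ℝⁿ, let l, u ∈ ℝⁿ with lᵢ ≤ uᵢ for all i, and let b̲ ≤ b̄ be real numbers. Set U = Σᵢ max(lᵢ·x'ᵢ, uᵢ·x'ᵢ) + b̄. Then the robust loss of a linear classifier over the relaxed model multiplicity satisfies sup{ (σ(w·x' + b))² : w ∈ [l,u], b ∈ [b̲, b̄] } = (σ(U))², and the supremum is attained. That is, for a one-layer linear model the IBP-overapproximated robust counterfactual loss (with target label 0) is a sound and exact upper bound on the true robust loss over the relaxed multiplicity set. -/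
noncomputable def sigmoid (t : ℝ) : ℝ := 1 / (1 + Real.exp (-t))

/-!
The score `w·x' + b` is maximised over the box coordinatewise: `wᵢ x'ᵢ` is linear in `wᵢ`, so its
maximum over `[lᵢ, uᵢ]` is attained at an endpoint and equals `max (lᵢ x'ᵢ) (uᵢ x'ᵢ)`, and `b` is
maximised at `b̄`. Hence the largest score is `U`, attained in the box, and `t ↦ σ(t)²` is monotone
because `σ` is monotone and positive.
-/

open Set Finset

lemma sigmoid_eq_real_sigmoid : sigmoid = Real.sigmoid := by
  funext t
  simp [sigmoid, Real.sigmoid_def]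

lemma monotone_sigmoid_sq : Monotone fun t => sigmoid t ^ 2 := by
  rw [sigmoid_eq_real_sigmoid]
  exact fun a b hab => pow_le_pow_left₀ (Real.sigmoid_nonneg a) (Real.sigmoid_monotone hab) 2

lemma mul_le_max_mul_of_mem_Icc {a b t : ℝ} (c : ℝ) (ht : t ∈ Icc a b) :
    t * c ≤ max (a * c) (b * c) := by
  rcases le_total 0 c with hc | hc
  · exact le_max_of_le_right (mul_le_mul_of_nonneg_right ht.2 hc)
  · exact le_max_of_le_left (mul_le_mul_of_nonpos_right ht.1 hc)

lemma isGreatest_image_mul_Icc {a b : ℝ} (hab : a ≤ b) (c : ℝ) :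
    IsGreatest ((· * c) '' Icc a b) (max (a * c) (b * c)) := by
  refine ⟨?_, forall_mem_image.2 fun t ht => mul_le_max_mul_of_mem_Icc c ht⟩
  rcases le_total (a * c) (b * c) with h | h
  · exact ⟨b, right_mem_Icc.2 hab, (max_eq_right h).symm⟩
  · exact ⟨a, left_mem_Icc.2 hab, (max_eq_left h).symm⟩

lemma isGreatest_image_sum_mul_Icc {ι : Type*} [Fintype ι] {l u : ι → ℝ} (hlu : l ≤ u)
    (x : ι → ℝ) :
    IsGreatest ((fun w => ∑ i, w i * x i) '' Icc l u) (∑ i, max (l i * x i) (u i * x i)) := by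
  refine ⟨?_, forall_mem_image.2 fun w hw =>
    sum_le_sum fun i _ => mul_le_max_mul_of_mem_Icc (x i) ⟨hw.1 i, hw.2 i⟩⟩
  choose w hw hwx using fun i => (isGreatest_image_mul_Icc (hlu i) (x i)).1
  exact ⟨w, ⟨fun i => (hw i).1, fun i => (hw i).2⟩, sum_congr rfl fun i _ => hwx i⟩

/-- For a one-layer linear model, the IBP-overapproximated robust
counterfactual loss (with target label 0) is a sound and exact upper bound on
the true robust loss over the relaxed multiplicity set: the supremum of
`(σ (w·x' + b))²` over the parameter box equals `(σ U)²` with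
`U = ∑ i, max (lᵢ x'ᵢ) (uᵢ x'ᵢ) + b̄`, and is attained. -/
theorem ibp_robust_loss_exact_linear (n : ℕ) (x' l u : Fin n → ℝ) (bl bu : ℝ)
    (hlu : ∀ i, l i ≤ u i) (hb : bl ≤ bu)
    (U : ℝ) (hU : U = (∑ i, max (l i * x' i) (u i * x' i)) + bu) :
    IsGreatest
      {v : ℝ | ∃ (w : Fin n → ℝ) (b : ℝ), (∀ i, l i ≤ w i ∧ w i ≤ u i) ∧
        bl ≤ b ∧ b ≤ bu ∧ v = (sigmoid ((∑ i, w i * x' i) + b)) ^ 2}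
      ((sigmoid U) ^ 2) := by
  have hscores : IsGreatest (image2 (· + ·) ((fun w => ∑ i, w i * x' i) '' Icc l u) (Icc bl bu))
      U := by
    rw [hU]
    exact (isGreatest_image_sum_mul_Icc hlu x').image2
      (fun _ _ _ h => add_le_add_left h _) (fun _ _ _ h => add_le_add_right h _) (isGreatest_Icc hb)
  convert! monotone_sigmoid_sq.map_isGreatest hscores using 1
  ext v
  constructor
  · rintro ⟨w, b, hw, hbl, hbu, rfl⟩
    exact ⟨_, ⟨_, ⟨w, ⟨fun i => (hw i).1, fun i => (hw i).2⟩, rfl⟩, b, ⟨hbl, hbu⟩, rfl⟩, rfl⟩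
  · rintro ⟨_, ⟨_, ⟨w, hw, rfl⟩, b, hb, rfl⟩, rfl⟩
    exact ⟨w, b, fun i => ⟨hw.1 i, hw.2 i⟩, hb.1, hb.2, rfl⟩
end

section
/- (Overapproximation by Simul-CROWN, case ŷ = 0.) Let B = [l,u] ⊆ ℝⁿ be a box, let p, q : ℝⁿ → ℝ, and let αˡ, μˡ ∈ ℝⁿ and βˡ, νˡ ∈ ℝ satisfy: for all θ ∈ B, p(θ) ≥ αˡ·θ + βˡ and q(θ) ≥ μˡ·θ + νˡ. Suppose the feasible set {θ ∈ B : αˡ·θ + βˡ ≤ 0} is nonempty and let t = inf{μˡ·θ + νˡ : θ ∈ B, αˡ·θ + βˡ ≤ 0}. Then for every θ ∈ B with p(θ) ≤ 0, one has q(θ) ≥ t, and hence L_MSE(σ(q(θ)), 1) = (σ(q(θ)) − 1)² ≤ (σ(t) − 1)². -/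
noncomputable def mseLoss (a y : ℝ) : ℝ := (a - y) ^ 2

lemma sigmoid_monotone : Monotone sigmoid := fun a b hab =>
  one_div_le_one_div_of_le (by positivity) (by gcongr)

lemma sigmoid_lt_one (t : ℝ) : sigmoid t < 1 :=
  (div_lt_one (by positivity)).2 (lt_add_of_pos_right 1 (Real.exp_pos (-t)))

lemma mseLoss_le_of_le_of_le {a b y : ℝ} (hab : a ≤ b) (hby : b ≤ y) :
    mseLoss b y ≤ mseLoss a y := by
  unfold mseLoss
  nlinarith

lemma bddBelow_setOf_eq_of_mem_box {ι : Type*} (l u : ι → ℝ)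
    {f : (ι → ℝ) → ℝ} (hf : Continuous f) (P : (ι → ℝ) → Prop) :
    BddBelow {v : ℝ | ∃ θ : ι → ℝ, (∀ i, l i ≤ θ i ∧ θ i ≤ u i) ∧ P θ ∧ v = f θ} := by
  refine ((isCompact_Icc (a := l) (b := u)).bddBelow_image hf.continuousOn).mono ?_
  rintro _ ⟨θ, hθ, -, rfl⟩
  exact ⟨θ, ⟨fun i => (hθ i).1, fun i => (hθ i).2⟩, rfl⟩

theorem simulCROWN_overapprox_y0_general (n : ℕ) (l u : Fin n → ℝ)
    (p q : (Fin n → ℝ) → ℝ) (αl μl : Fin n → ℝ) (βl νl : ℝ)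
    (hp : ∀ θ : Fin n → ℝ, (∀ i, l i ≤ θ i ∧ θ i ≤ u i) →
      (∑ i, αl i * θ i) + βl ≤ p θ)
    (hq : ∀ θ : Fin n → ℝ, (∀ i, l i ≤ θ i ∧ θ i ≤ u i) →
      (∑ i, μl i * θ i) + νl ≤ q θ)
    (t : ℝ)
    (ht : t = sInf {v : ℝ | ∃ θ : Fin n → ℝ, (∀ i, l i ≤ θ i ∧ θ i ≤ u i) ∧
      (∑ i, αl i * θ i) + βl ≤ 0 ∧ v = (∑ i, μl i * θ i) + νl})
    (θ : Fin n → ℝ) (hθ : ∀ i, l i ≤ θ i ∧ θ i ≤ u i) (hpθ : p θ ≤ 0) :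
    t ≤ q θ ∧ mseLoss (sigmoid (q θ)) 1 ≤ (sigmoid t - 1) ^ 2 := by
  have hfeas : (∑ i, αl i * θ i) + βl ≤ 0 := (hp θ hθ).trans hpθ
  -- `sInf` of a set unbounded below is the junk value `0`; the compact box rules this out.
  have hbdd := bddBelow_setOf_eq_of_mem_box l u
    (f := fun θ => (∑ i, μl i * θ i) + νl) (by fun_prop) (fun θ => (∑ i, αl i * θ i) + βl ≤ 0)
  have htq : t ≤ q θ := ht ▸ (csInf_le hbdd ⟨θ, hθ, hfeas, rfl⟩).trans (hq θ hθ)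
  exact ⟨htq, mseLoss_le_of_le_of_le (sigmoid_monotone htq) (sigmoid_lt_one _).le⟩

/-- Overapproximation by Simul-CROWN, case ŷ = 0: if `αˡ·θ + βˡ` and
`μˡ·θ + νˡ` are linear lower bounds on the pre-sigmoid outputs `p θ` and `q θ`
over the parameter box, and `t` is the optimal value of the Simul-CROWN LP
(minimization), then every parameter `θ` in the box with `p θ ≤ 0` satisfies
`q θ ≥ t`, and hence its MSE loss against target 1 is at most `(σ t − 1)²`. -/
theorem simulCROWN_overapprox_y0 (n : ℕ) (l u : Fin n → ℝ)
    (hlu : ∀ i, l i ≤ u i)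
    (p q : (Fin n → ℝ) → ℝ) (αl μl : Fin n → ℝ) (βl νl : ℝ)
    (hp : ∀ θ : Fin n → ℝ, (∀ i, l i ≤ θ i ∧ θ i ≤ u i) →
      (∑ i, αl i * θ i) + βl ≤ p θ)
    (hq : ∀ θ : Fin n → ℝ, (∀ i, l i ≤ θ i ∧ θ i ≤ u i) →
      (∑ i, μl i * θ i) + νl ≤ q θ)
    (hne : ∃ θ : Fin n → ℝ, (∀ i, l i ≤ θ i ∧ θ i ≤ u i) ∧
      (∑ i, αl i * θ i) + βl ≤ 0)
    (t : ℝ)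
    (ht : t = sInf {v : ℝ | ∃ θ : Fin n → ℝ, (∀ i, l i ≤ θ i ∧ θ i ≤ u i) ∧
      (∑ i, αl i * θ i) + βl ≤ 0 ∧ v = (∑ i, μl i * θ i) + νl})
    (θ : Fin n → ℝ) (hθ : ∀ i, l i ≤ θ i ∧ θ i ≤ u i) (hpθ : p θ ≤ 0) :
    t ≤ q θ ∧ mseLoss (sigmoid (q θ)) 1 ≤ (sigmoid t - 1) ^ 2 :=
  simulCROWN_overapprox_y0_general n l u p q αl μl βl νl hp hq t ht θ hθ hpθ
end

section
/- (Equality condition for Simul-CROWN and CROWN-IBP, max case.) Let a, c ∈ ℝⁿ and let [l,u] ⊆ ℝⁿ be a box. If aᵢ·cᵢ > 0 for every index i, and there exists z ∈ [l,u] with a·z ≥ 0, then the constrained maximum equals the unconstrained one: max{c·z : z ∈ [l,u], a·z ≥ 0} = max{c·z : z ∈ [l,u]} = Σᵢ max(cᵢ·lᵢ, cᵢ·uᵢ). -/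
/-!
For each coordinate the endpoint of `[lᵢ, uᵢ]` chosen by the sign of `cᵢ` maximizes `cᵢ zᵢ`,
so the corresponding vertex of the box attains `∑ i, max (cᵢ lᵢ) (cᵢ uᵢ)`. When `aᵢ cᵢ > 0`,
`aᵢ` and `cᵢ` have the same sign, so this vertex also maximizes `a · z` over the box; since
some point of the box has `a · z ≥ 0`, so does the vertex, and the constraint costs nothing.
-/

open Finset

noncomputable def maxEndpoint (c l u : ℝ) : ℝ := if 0 ≤ c then u else l

lemma maxEndpoint_mem_Icc {c l u : ℝ} (h : l ≤ u) : maxEndpoint c l u ∈ Set.Icc l u := by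
  unfold maxEndpoint
  split_ifs
  · exact Set.right_mem_Icc.2 h
  · exact Set.left_mem_Icc.2 h

lemma mul_maxEndpoint {c l u : ℝ} (h : l ≤ u) :
    c * maxEndpoint c l u = max (c * l) (c * u) := by
  unfold maxEndpoint
  split_ifs with hc
  · exact (max_eq_right (mul_le_mul_of_nonneg_left h hc)).symm
  · exact (max_eq_left (mul_le_mul_of_nonpos_left h (le_of_not_ge hc))).symm

lemma mul_le_max_mul_of_mem_Icc_s9 {c l u x : ℝ} (hl : l ≤ x) (hu : x ≤ u) :
    c * x ≤ max (c * l) (c * u) := by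
  rcases le_total 0 c with hc | hc
  · exact le_max_of_le_right (mul_le_mul_of_nonneg_left hu hc)
  · exact le_max_of_le_left (mul_le_mul_of_nonpos_left hl hc)

lemma maxEndpoint_eq_of_mul_pos {a c : ℝ} (hac : 0 < a * c) (l u : ℝ) :
    maxEndpoint a l u = maxEndpoint c l u := by
  have hsign : 0 ≤ a ↔ 0 ≤ c := by
    rcases pos_and_pos_or_neg_and_neg_of_mul_pos hac with ⟨ha, hc⟩ | ⟨ha, hc⟩
    · exact iff_of_true ha.le hc.le
    · exact iff_of_false ha.not_ge hc.not_ge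
  simp only [maxEndpoint, hsign]

section Box

variable {ι : Type*} [Fintype ι]

lemma sum_mul_le_sum_max_of_mem_box {c l u z : ι → ℝ} (hz : ∀ i, l i ≤ z i ∧ z i ≤ u i) :
    ∑ i, c i * z i ≤ ∑ i, max (c i * l i) (c i * u i) :=
  sum_le_sum fun i _ => mul_le_max_mul_of_mem_Icc_s9 (hz i).1 (hz i).2

lemma sum_mul_maxEndpoint {c l u : ι → ℝ} (hlu : ∀ i, l i ≤ u i) :
    ∑ i, c i * maxEndpoint (c i) (l i) (u i) = ∑ i, max (c i * l i) (c i * u i) :=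
  sum_congr rfl fun i _ => mul_maxEndpoint (hlu i)

end Box

theorem simulCROWN_eq_crownIBP_max_general (n : ℕ) (a c l u : Fin n → ℝ)
    (hac : ∀ i, 0 < a i * c i)
    (hne : ∃ z : Fin n → ℝ, (∀ i, l i ≤ z i ∧ z i ≤ u i) ∧ 0 ≤ ∑ i, a i * z i) :
    IsGreatest
        {v : ℝ | ∃ z : Fin n → ℝ, (∀ i, l i ≤ z i ∧ z i ≤ u i) ∧
          0 ≤ (∑ i, a i * z i) ∧ v = ∑ i, c i * z i}
        (∑ i, max (c i * l i) (c i * u i)) ∧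
      IsGreatest
        {v : ℝ | ∃ z : Fin n → ℝ, (∀ i, l i ≤ z i ∧ z i ≤ u i) ∧
          v = ∑ i, c i * z i}
        (∑ i, max (c i * l i) (c i * u i)) := by
  obtain ⟨z₀, hz₀, hz₀a⟩ := hne
  have hlu : ∀ i, l i ≤ u i := fun i => (hz₀ i).1.trans (hz₀ i).2
  set zmax : Fin n → ℝ := fun i => maxEndpoint (c i) (l i) (u i)
  have hzmax : ∀ i, l i ≤ zmax i ∧ zmax i ≤ u i := fun i => maxEndpoint_mem_Icc (hlu i)
  have hval : ∑ i, max (c i * l i) (c i * u i) = ∑ i, c i * zmax i :=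
    (sum_mul_maxEndpoint hlu).symm
  have hfeas : 0 ≤ ∑ i, a i * zmax i := by
    have hsame : zmax = fun i => maxEndpoint (a i) (l i) (u i) :=
      funext fun i => (maxEndpoint_eq_of_mul_pos (hac i) _ _).symm
    calc 0 ≤ ∑ i, a i * z₀ i := hz₀a
      _ ≤ ∑ i, max (a i * l i) (a i * u i) := sum_mul_le_sum_max_of_mem_box hz₀
      _ = ∑ i, a i * zmax i := by rw [hsame, sum_mul_maxEndpoint hlu]
  refine ⟨⟨⟨zmax, hzmax, hfeas, hval⟩, ?_⟩, ⟨⟨zmax, hzmax, hval⟩, ?_⟩⟩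
  · rintro v ⟨z, hz, -, rfl⟩
    exact sum_mul_le_sum_max_of_mem_box hz
  · rintro v ⟨z, hz, rfl⟩
    exact sum_mul_le_sum_max_of_mem_box hz

/-- Equality condition for Simul-CROWN and CROWN-IBP, max case: if
`aᵢ cᵢ > 0` for every `i` and the feasible set is nonempty, then the
constrained maximum equals the unconstrained one, and both equal
`∑ i, max (cᵢ lᵢ) (cᵢ uᵢ)`. -/
theorem simulCROWN_eq_crownIBP_max (n : ℕ) (a c l u : Fin n → ℝ)
    (hlu : ∀ i, l i ≤ u i)
    (hac : ∀ i, 0 < a i * c i)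
    (hne : ∃ z : Fin n → ℝ, (∀ i, l i ≤ z i ∧ z i ≤ u i) ∧ 0 ≤ ∑ i, a i * z i) :
    IsGreatest
        {v : ℝ | ∃ z : Fin n → ℝ, (∀ i, l i ≤ z i ∧ z i ≤ u i) ∧
          0 ≤ (∑ i, a i * z i) ∧ v = ∑ i, c i * z i}
        (∑ i, max (c i * l i) (c i * u i)) ∧
      IsGreatest
        {v : ℝ | ∃ z : Fin n → ℝ, (∀ i, l i ≤ z i ∧ z i ≤ u i) ∧
          v = ∑ i, c i * z i}
        (∑ i, max (c i * l i) (c i * u i)) :=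
  simulCROWN_eq_crownIBP_max_general n a c l u hac hne
end

section
/- (Equality condition for Simul-CROWN and CROWN-IBP, min case.) Let a, c ∈ ℝⁿ and let [l,u] ⊆ ℝⁿ be a box. If aᵢ·cᵢ > 0 for every index i, and there exists z ∈ [l,u] with a·z ≤ 0, then min{c·z : z ∈ [l,u], a·z ≤ 0} = min{c·z : z ∈ [l,u]} = Σᵢ min(cᵢ·lᵢ, cᵢ·uᵢ). -/
/-! Since `aᵢ` and `cᵢ` have the same sign, the vertex of the box minimizing `z ↦ c·z`
(take `lᵢ` where `cᵢ > 0` and `uᵢ` otherwise) also minimizes `z ↦ a·z`. A feasible point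
therefore forces this vertex to be feasible, so the constraint `a·z ≤ 0` does not cut off the
unconstrained minimizer. -/

open Finset

section Endpoint

def argminEndpoint {α : Type*} [Zero α] [LinearOrder α] (c l u : α) : α :=
  if 0 < c then l else u

theorem argminEndpoint_mem_Icc {α : Type*} [Zero α] [LinearOrder α] {c l u : α} (hlu : l ≤ u) :
    argminEndpoint c l u ∈ Set.Icc l u := by
  unfold argminEndpoint
  split_ifs
  · exact Set.left_mem_Icc.2 hlu
  · exact Set.right_mem_Icc.2 hlu

variable {α : Type*} [Ring α] [LinearOrder α] [IsStrictOrderedRing α]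

theorem min_mul_le_mul_of_mem_Icc {c l u z : α} (hl : l ≤ z) (hu : z ≤ u) :
    min (c * l) (c * u) ≤ c * z := by
  rcases le_total 0 c with hc | hc
  · exact (min_le_left _ _).trans (mul_le_mul_of_nonneg_left hl hc)
  · exact (min_le_right _ _).trans (mul_le_mul_of_nonpos_left hu hc)

theorem mul_argminEndpoint {c l u : α} (hlu : l ≤ u) :
    c * argminEndpoint c l u = min (c * l) (c * u) := by
  unfold argminEndpoint
  split_ifs with hc
  · exact (min_eq_left (mul_le_mul_of_nonneg_left hlu hc.le)).symm
  · exact (min_eq_right (mul_le_mul_of_nonpos_left hlu (not_lt.1 hc))).symm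

theorem argminEndpoint_eq_of_mul_pos {a c : α} (l u : α) (hac : 0 < a * c) :
    argminEndpoint c l u = argminEndpoint a l u := by
  unfold argminEndpoint
  rcases mul_pos_iff.1 hac with ⟨ha, hc⟩ | ⟨ha, hc⟩
  · rw [if_pos ha, if_pos hc]
  · rw [if_neg ha.not_gt, if_neg hc.not_gt]

end Endpoint

section Box

variable {ι α : Type*} [Fintype ι] [Ring α] [LinearOrder α] [IsStrictOrderedRing α]

theorem sum_min_mul_le_sum_mul {c l u z : ι → α} (hz : ∀ i, l i ≤ z i ∧ z i ≤ u i) :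
    ∑ i, min (c i * l i) (c i * u i) ≤ ∑ i, c i * z i :=
  sum_le_sum fun i _ => min_mul_le_mul_of_mem_Icc (hz i).1 (hz i).2

theorem sum_mul_argminEndpoint {c l u : ι → α} (hlu : ∀ i, l i ≤ u i) :
    ∑ i, c i * argminEndpoint (c i) (l i) (u i) = ∑ i, min (c i * l i) (c i * u i) :=
  sum_congr rfl fun i _ => mul_argminEndpoint (hlu i)

theorem sum_mul_argminEndpoint_le_of_mul_pos {a c l u z : ι → α} (hac : ∀ i, 0 < a i * c i)
    (hz : ∀ i, l i ≤ z i ∧ z i ≤ u i) :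
    ∑ i, a i * argminEndpoint (c i) (l i) (u i) ≤ ∑ i, a i * z i := by
  have hlu i : l i ≤ u i := (hz i).1.trans (hz i).2
  simp only [argminEndpoint_eq_of_mul_pos _ _ (hac _)]
  rw [sum_mul_argminEndpoint hlu]
  exact sum_min_mul_le_sum_mul hz

end Box

theorem simulCROWN_eq_crownIBP_min_general (n : ℕ) (a c l u : Fin n → ℝ)
    (hac : ∀ i, 0 < a i * c i)
    (hne : ∃ z : Fin n → ℝ, (∀ i, l i ≤ z i ∧ z i ≤ u i) ∧ (∑ i, a i * z i) ≤ 0) :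
    IsLeast
        {v : ℝ | ∃ z : Fin n → ℝ, (∀ i, l i ≤ z i ∧ z i ≤ u i) ∧
          (∑ i, a i * z i) ≤ 0 ∧ v = ∑ i, c i * z i}
        (∑ i, min (c i * l i) (c i * u i)) ∧
      IsLeast
        {v : ℝ | ∃ z : Fin n → ℝ, (∀ i, l i ≤ z i ∧ z i ≤ u i) ∧
          v = ∑ i, c i * z i}
        (∑ i, min (c i * l i) (c i * u i)) := by
  obtain ⟨z₀, hz₀, hz₀a⟩ := hne
  have hlu i : l i ≤ u i := (hz₀ i).1.trans (hz₀ i).2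
  set zₘ : Fin n → ℝ := fun i => argminEndpoint (c i) (l i) (u i)
  have hzₘ i : l i ≤ zₘ i ∧ zₘ i ≤ u i := argminEndpoint_mem_Icc (hlu i)
  have hzₘa : ∑ i, a i * zₘ i ≤ 0 := (sum_mul_argminEndpoint_le_of_mul_pos hac hz₀).trans hz₀a
  have hval := (sum_mul_argminEndpoint (c := c) hlu).symm
  refine ⟨⟨⟨zₘ, hzₘ, hzₘa, hval⟩, ?_⟩, ⟨⟨zₘ, hzₘ, hval⟩, ?_⟩⟩
  · rintro v ⟨z, hz, -, rfl⟩
    exact sum_min_mul_le_sum_mul hz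
  · rintro v ⟨z, hz, rfl⟩
    exact sum_min_mul_le_sum_mul hz

/-- Equality condition for Simul-CROWN and CROWN-IBP, min case: if
`aᵢ cᵢ > 0` for every `i` and the feasible set is nonempty, then the
constrained minimum equals the unconstrained one, and both equal
`∑ i, min (cᵢ lᵢ) (cᵢ uᵢ)`. -/
theorem simulCROWN_eq_crownIBP_min (n : ℕ) (a c l u : Fin n → ℝ)
    (hlu : ∀ i, l i ≤ u i)
    (hac : ∀ i, 0 < a i * c i)
    (hne : ∃ z : Fin n → ℝ, (∀ i, l i ≤ z i ∧ z i ≤ u i) ∧ (∑ i, a i * z i) ≤ 0) :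
    IsLeast
        {v : ℝ | ∃ z : Fin n → ℝ, (∀ i, l i ≤ z i ∧ z i ≤ u i) ∧
          (∑ i, a i * z i) ≤ 0 ∧ v = ∑ i, c i * z i}
        (∑ i, min (c i * l i) (c i * u i)) ∧
      IsLeast
        {v : ℝ | ∃ z : Fin n → ℝ, (∀ i, l i ≤ z i ∧ z i ≤ u i) ∧
          v = ∑ i, c i * z i}
        (∑ i, min (c i * l i) (c i * u i)) :=
  simulCROWN_eq_crownIBP_min_general n a c l u hac hne
end
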